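/- arXiv:2210.08326 — 2 statements merged into one kernel-verified Lean document; each statement's English description precedes it below -/
import Mathlib

section
/- Let X, Z be real-valued random variables on a probability space, with F(y) = P(Z ≤ y) and G(y) = P(X ≤ y). Suppose G is k-Lipschitz for some k > 0, and let σ² = Var(X − Z) and μ = E[X − Z]. Then for every ε > 0, sup_c |F(c) − G(c + μ)| ≤ kε + σ²/ε². -/
open MeasureTheory ProbabilityTheory

/-! Off the event `|X - Z - m| ≥ ε`, whose probability Chebyshev bounds by `σ² / ε²`, the event
`Z ≤ c` lies between `X ≤ c + m - ε` and `X ≤ c + m + ε`. Hence `F c` is squeezed between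
`G (c + m ∓ ε)` up to `σ² / ε²`, and the Lipschitz bound moves `G (c + m ∓ ε)` to `G (c + m)` at
the cost of `k ε`. -/

namespace ProbabilityTheory

variable {Ω : Type*} [MeasurableSpace Ω] {μ : Measure Ω} [IsFiniteMeasure μ]

theorem measureReal_ge_le_variance_div_sq {X : Ω → ℝ} (hX : MemLp X 2 μ)
    {c : ℝ} (hc : 0 < c) :
    μ.real {ω | c ≤ |X ω - μ[X]|} ≤ variance X μ / c ^ 2 :=
  ENNReal.toReal_le_of_le_ofReal (div_nonneg (variance_nonneg X μ) (sq_nonneg c))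
    (meas_ge_le_variance_div_sq hX hc)

theorem measureReal_le_add_measureReal_abs_ge {s t : Set Ω} {f : Ω → ℝ} {ε : ℝ}
    (h : ∀ ω ∈ s, |f ω| < ε → ω ∈ t) :
    μ.real s ≤ μ.real t + μ.real {ω | ε ≤ |f ω|} := by
  have hsub : s ⊆ t ∪ {ω | ε ≤ |f ω|} := fun ω hω ↦ by
    by_cases hf : ε ≤ |f ω|
    · exact Or.inr hf
    · exact Or.inl (h ω hω (not_le.mp hf))
  exact (measureReal_mono hsub).trans (measureReal_union_le _ _)

end ProbabilityTheory

theorem stmt1_general {Ω : Type*} [MeasureSpace Ω] {μ : Measure Ω} [IsProbabilityMeasure μ]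
    (X Z : Ω → ℝ)
    (hL2 : MemLp (fun ω => X ω - Z ω) 2 μ)
    (F G : ℝ → ℝ)
    (hF : ∀ y, F y = (μ {ω | Z ω ≤ y}).toReal)
    (hG : ∀ y, G y = (μ {ω | X ω ≤ y}).toReal)
    (k : ℝ)
    (hLip : ∀ x y, |G x - G y| ≤ k * |x - y|)
    (m σ : ℝ)
    (hm : m = ∫ ω, (X ω - Z ω) ∂μ)
    (hσ : σ ^ 2 = variance (fun ω => X ω - Z ω) μ) :
    ∀ ε : ℝ, 0 < ε → ∀ c : ℝ, |F c - G (c + m)| ≤ k * ε + σ ^ 2 / ε ^ 2 := by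
  intro ε hε c
  have tail : μ.real {ω | ε ≤ |X ω - Z ω - m|} ≤ σ ^ 2 / ε ^ 2 := by
    rw [hm, hσ]
    exact measureReal_ge_le_variance_div_sq hL2 hε
  have upper : F c ≤ G (c + m + ε) + μ.real {ω | ε ≤ |X ω - Z ω - m|} := by
    rw [hF, hG]
    refine measureReal_le_add_measureReal_abs_ge fun ω (hZω : Z ω ≤ c) hlt ↦ ?_
    show X ω ≤ c + m + ε
    linarith [(abs_lt.mp hlt).2]
  have lower : G (c + m - ε) ≤ F c + μ.real {ω | ε ≤ |X ω - Z ω - m|} := by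
    rw [hF, hG]
    refine measureReal_le_add_measureReal_abs_ge fun ω (hXω : X ω ≤ c + m - ε) hlt ↦ ?_
    show Z ω ≤ c
    linarith [(abs_lt.mp hlt).1]
  have lipschitz_right := hLip (c + m + ε) (c + m)
  have lipschitz_left := hLip (c + m - ε) (c + m)
  rw [add_sub_cancel_left, abs_of_pos hε] at lipschitz_right
  rw [sub_sub_cancel_left, abs_neg, abs_of_pos hε] at lipschitz_left
  rw [abs_le] at lipschitz_right lipschitz_left ⊢
  constructor <;> linarith

/-- Let `X, Z` be real random variables on a probability space with CDFs `G` and `F`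
respectively.  If `G` is `k`-Lipschitz, `m = E[X - Z]` and `σ² = Var(X - Z)`, then for every
`ε > 0` and every `c`, `|F c - G (c + m)| ≤ k ε + σ²/ε²`. -/
theorem stmt1 {Ω : Type*} [MeasureSpace Ω] {μ : Measure Ω} [IsProbabilityMeasure μ]
    (X Z : Ω → ℝ) (hX : Measurable X) (hZ : Measurable Z)
    (hL2 : MemLp (fun ω => X ω - Z ω) 2 μ)
    (F G : ℝ → ℝ)
    (hF : ∀ y, F y = (μ {ω | Z ω ≤ y}).toReal)
    (hG : ∀ y, G y = (μ {ω | X ω ≤ y}).toReal)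
    (k : ℝ) (hk : 0 < k)
    (hLip : ∀ x y, |G x - G y| ≤ k * |x - y|)
    (m σ : ℝ)
    (hm : m = ∫ ω, (X ω - Z ω) ∂μ)
    (hσ : σ ^ 2 = variance (fun ω => X ω - Z ω) μ) :
    ∀ ε : ℝ, 0 < ε → ∀ c : ℝ, |F c - G (c + m)| ≤ k * ε + σ ^ 2 / ε ^ 2 :=
  stmt1_general X Z hL2 F G hF hG k hLip m σ hm hσ
end

section
/- Let X, Z be real-valued random variables with CDFs G and F respectively, where both F and G are k-Lipschitz, E[X − Z] = μ, and Var(X − Z) = σ². Then inf_{c ∈ ℝ} sup_{y ∈ ℝ} |F(y) − G(y + c)| ≤ 3(kσ/2)^{2/3}. -/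
/-!
Compare `Z` with `X` shifted by `c = E[X - Z]`. Outside the event `|X - Z - c| ≥ ε`, whose probability
Chebyshev bounds by `σ² / ε²`, the two variables are `ε`-close, so each CDF is dominated by the other
one moved by `ε` plus `σ² / ε²`; the Lipschitz bound turns the move into an error `k ε`. Minimising
`k ε + σ² / ε²` over `ε > 0` gives `3 (k σ / 2) ^ (2 / 3)`.
-/

open MeasureTheory ProbabilityTheory

section Deviation

variable {Ω : Type*} [MeasurableSpace Ω] {μ : Measure Ω} [IsFiniteMeasure μ]

theorem measureReal_abs_sub_integral_ge_le {Y : Ω → ℝ} (hY : MemLp Y 2 μ) {ε : ℝ} (hε : 0 < ε) :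
    μ.real {ω | ε ≤ |Y ω - μ[Y]|} ≤ variance Y μ / ε ^ 2 :=
  ENNReal.toReal_le_of_le_ofReal (div_nonneg (variance_nonneg _ _) (sq_nonneg _))
    (meas_ge_le_variance_div_sq hY hε)

theorem measureReal_le_le_add_measureReal_abs_sub_ge (X Z : Ω → ℝ) (c y ε : ℝ) :
    μ.real {ω | Z ω ≤ y} ≤
        μ.real {ω | X ω ≤ y + c + ε} + μ.real {ω | ε ≤ |X ω - Z ω - c|} ∧
      μ.real {ω | X ω ≤ y + c} ≤
        μ.real {ω | Z ω ≤ y + ε} + μ.real {ω | ε ≤ |X ω - Z ω - c|} := by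
  refine ⟨(measureReal_mono fun ω hω => ?_).trans (measureReal_union_le _ _),
    (measureReal_mono fun ω hω => ?_).trans (measureReal_union_le _ _)⟩ <;>
  · simp only [Set.mem_union, Set.mem_ofPred_eq] at hω ⊢
    rcases le_or_gt ε |X ω - Z ω - c| with hfar | hclose
    · exact Or.inr hfar
    · exact Or.inl (by linarith [abs_lt.1 hclose])

end Deviation

theorem abs_sub_le_of_le_add_of_le_add {f g : ℝ → ℝ} {k c y ε p : ℝ} (hε : 0 ≤ ε)
    (hf : ∀ x y, |f x - f y| ≤ k * |x - y|) (hg : ∀ x y, |g x - g y| ≤ k * |x - y|)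
    (hfg : f y ≤ g (y + c + ε) + p) (hgf : g (y + c) ≤ f (y + ε) + p) :
    |f y - g (y + c)| ≤ k * ε + p := by
  have hf_step := (le_abs_self _).trans (hf (y + ε) y)
  have hg_step := (le_abs_self _).trans (hg (y + c + ε) (y + c))
  simp only [add_sub_cancel_left, abs_of_nonneg hε] at hf_step hg_step
  rw [abs_le]
  constructor <;> linarith

theorem le_three_mul_rpow_of_forall_le_mul_add_div_sq {a k σ : ℝ} (hk : 0 < k) (hσ : 0 ≤ σ)
    (h : ∀ ε > 0, a ≤ k * ε + σ ^ 2 / ε ^ 2) : a ≤ 3 * (k * σ / 2) ^ ((2 : ℝ) / 3) := by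
  rcases hσ.eq_or_lt with rfl | hσ
  · refine le_of_forall_pos_le_add fun δ hδ => ?_
    simpa [mul_div_cancel₀ _ hk.ne'] using h (δ / k) (by positivity)
  · set v := (k * σ / 2) ^ ((2 : ℝ) / 3)
    have hv : 0 < v := by positivity
    have hv_cube : v ^ 3 = (k * σ / 2) ^ 2 := by
      rw [← Real.rpow_natCast, ← Real.rpow_mul (by positivity)]
      norm_num
    -- `ε = 2 v / k` is the minimiser: there `k ε = 2 v` and `σ² / ε² = v`.
    calc a ≤ k * (2 * v / k) + σ ^ 2 / (2 * v / k) ^ 2 := h _ (by positivity)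
      _ = 3 * v := by
        field_simp
        linear_combination -4 * hv_cube

theorem stmt2_general {Ω : Type*} [MeasureSpace Ω] {μ : Measure Ω} [IsProbabilityMeasure μ]
    (X Z : Ω → ℝ)
    (hL2 : MemLp (fun ω => X ω - Z ω) 2 μ)
    (F G : ℝ → ℝ)
    (hF : ∀ y, F y = (μ {ω | Z ω ≤ y}).toReal)
    (hG : ∀ y, G y = (μ {ω | X ω ≤ y}).toReal)
    (k : ℝ) (hk : 0 < k)
    (hLipF : ∀ x y, |F x - F y| ≤ k * |x - y|)
    (hLipG : ∀ x y, |G x - G y| ≤ k * |x - y|)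
    (σ : ℝ) (hσ0 : 0 ≤ σ)
    (hσ : σ ^ 2 = variance (fun ω => X ω - Z ω) μ) :
    (⨅ c : ℝ, ⨆ y : ℝ, |F y - G (y + c)|) ≤ 3 * (k * σ / 2) ^ ((2 : ℝ) / 3) := by
  set c := ∫ ω, (X ω - Z ω) ∂μ
  have hfar : ∀ ε > 0, μ.real {ω | ε ≤ |X ω - Z ω - c|} ≤ σ ^ 2 / ε ^ 2 := fun ε hε =>
    hσ ▸ measureReal_abs_sub_integral_ge_le hL2 hε
  have hpoint : ∀ y, |F y - G (y + c)| ≤ 3 * (k * σ / 2) ^ ((2 : ℝ) / 3) := fun y =>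
    le_three_mul_rpow_of_forall_le_mul_add_div_sq hk hσ0 fun ε hε => by
      obtain ⟨hZX, hXZ⟩ := measureReal_le_le_add_measureReal_abs_sub_ge (μ := μ) X Z c y ε
      have hB := hfar ε hε
      simp only [measureReal_def, ← hF, ← hG] at hZX hXZ hB
      linarith [abs_sub_le_of_le_add_of_le_add hε.le hLipF hLipG hZX hXZ]
  refine (ciInf_le ⟨0, ?_⟩ c).trans (ciSup_le hpoint)
  rintro _ ⟨c', rfl⟩
  exact Real.iSup_nonneg fun y => abs_nonneg _

/-- Distributional shape bound: if `F`, `G` are the (k-Lipschitz) CDFs of `Z` and `X`, with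
`E[X - Z] = m` and `Var(X - Z) = σ²`, then the location-shifted Kolmogorov–Smirnov distance
between them is at most `3 (kσ/2)^(2/3)`. -/
theorem stmt2 {Ω : Type*} [MeasureSpace Ω] {μ : Measure Ω} [IsProbabilityMeasure μ]
    (X Z : Ω → ℝ) (hX : Measurable X) (hZ : Measurable Z)
    (hL2 : MemLp (fun ω => X ω - Z ω) 2 μ)
    (F G : ℝ → ℝ)
    (hF : ∀ y, F y = (μ {ω | Z ω ≤ y}).toReal)
    (hG : ∀ y, G y = (μ {ω | X ω ≤ y}).toReal)
    (k : ℝ) (hk : 0 < k)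
    (hLipF : ∀ x y, |F x - F y| ≤ k * |x - y|)
    (hLipG : ∀ x y, |G x - G y| ≤ k * |x - y|)
    (m σ : ℝ) (hσ0 : 0 ≤ σ)
    (hm : m = ∫ ω, (X ω - Z ω) ∂μ)
    (hσ : σ ^ 2 = variance (fun ω => X ω - Z ω) μ) :
    (⨅ c : ℝ, ⨆ y : ℝ, |F y - G (y + c)|) ≤ 3 * (k * σ / 2) ^ ((2 : ℝ) / 3) :=
  stmt2_general X Z hL2 F G hF hG k hk hLipF hLipG σ hσ0 hσ
end
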